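/- Let n ≥ 1 and let τ be a real number. Let B(n, τ) be the n×n real matrix whose (i,j)-entry (for 1 ≤ i, j ≤ n) equals C(2n−j+1, 2i−1)·τ^(2n−2i−j+2) when 2i−1 ≤ 2n−j+1, and 0 otherwise. If det B(n, τ) = 0, then τ = 0. -/
import Mathlib


open Polynomial

lemma coeff_comp_neg_X' {R : Type*} [CommRing R] (p : R[X]) (k : ℕ) :
    (p.comp (-X)).coeff k = (-1)^k * p.coeff k := by
  induction p using Polynomial.induction_on' with
  | add p q hp hq => simp [add_comp, hp, hq, mul_add]
  | monomial m a =>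
    rw [monomial_comp, neg_pow, show ((-1 : R[X])^m) = C ((-1)^m) by simp, coeff_monomial]
    rw [mul_left_comm, coeff_C_mul, coeff_C_mul, coeff_X_pow]
    rcases eq_or_ne m k with rfl | h
    · simp
    · simp [h, Ne.symm h]


/-- For `n ≥ 1` and a real number `τ`, if the determinant of the `n × n` matrix
`B(n, τ)` whose `(i,j)`-entry is `C(2n - j + 1, 2i - 1) * τ^(2n - 2i - j + 2)`
when `2i - 1 ≤ 2n - j + 1` and `0` otherwise vanishes, then `τ = 0`. -/
theorem det_scaled_binomial_matrix_eq_zero_iff (n : ℕ) (hn : 1 ≤ n) (τ : ℝ)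
    (h : Matrix.det (Matrix.of fun i j : Fin n =>
      if 2 * (i.val + 1) - 1 ≤ 2 * n - (j.val + 1) + 1 then
        ((2 * n - (j.val + 1) + 1).choose (2 * (i.val + 1) - 1) : ℝ) *
          τ ^ (2 * n + 2 - 2 * (i.val + 1) - (j.val + 1))
      else 0) = 0) :
    τ = 0 := by
  classical
  by_contra hτ
  obtain ⟨v, hv0, hv⟩ := Matrix.exists_mulVec_eq_zero_iff.mpr h
  set M : Matrix (Fin n) (Fin n) ℝ := Matrix.of fun i j : Fin n =>
      if 2 * (i.val + 1) - 1 ≤ 2 * n - (j.val + 1) + 1 then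
        ((2 * n - (j.val + 1) + 1).choose (2 * (i.val + 1) - 1) : ℝ) *
          τ ^ (2 * n + 2 - 2 * (i.val + 1) - (j.val + 1))
      else 0 with hMdef
  have hM : ∀ i j : Fin n, M i j =
      ((2*n - j.val).choose (2*i.val+1) : ℝ) * τ ^ ((2*n - j.val) - (2*i.val+1)) := by
    intro i j
    have hj : (j : ℕ) < n := j.isLt
    show (if _ then _ else _) = _
    split_ifs with hc
    · have e1 : 2*n - (j.val+1) + 1 = 2*n - j.val := by omega
      have e2 : 2*(i.val+1) - 1 = 2*i.val+1 := by omega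
      have e3 : 2*n + 2 - 2*(i.val+1) - (j.val+1) = (2*n - j.val) - (2*i.val+1) := by omega
      rw [e1, e2, e3]
    · have hlt : 2*n - j.val < 2*i.val+1 := by omega
      rw [Nat.choose_eq_zero_of_lt hlt]
      simp
  set f : ℝ[X] := ∑ j : Fin n, C (v j) * (X + C τ)^(2*n - j.val) with hf
  have hfc : ∀ k, f.coeff k
      = ∑ j : Fin n, v j * (τ ^ ((2*n - j.val) - k) * ((2*n - j.val).choose k : ℝ)) := by
    intro k
    rw [hf, finset_sum_coeff]
    refine Finset.sum_congr rfl fun j _ => ?_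
    rw [coeff_C_mul, coeff_X_add_C_pow]
  have hdeg : f.natDegree ≤ 2*n := by
    refine natDegree_sum_le_of_forall_le _ _ fun j _ => ?_
    calc (C (v j) * (X + C τ)^(2*n - j.val)).natDegree
        ≤ ((X + C τ : ℝ[X])^(2*n - j.val)).natDegree := natDegree_C_mul_le _ _
      _ ≤ 2*n := by rw [natDegree_pow, natDegree_X_add_C]; omega
  have hodd : ∀ k, Odd k → f.coeff k = 0 := by
    intro k hk
    have hk1 : k % 2 = 1 := Nat.odd_iff.mp hk
    by_cases hk2 : k ≤ 2*n - 1
    · set i : ℕ := k / 2 with hi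
      have hik : k = 2*i+1 := by omega
      have hin : i < n := by omega
      have hvi := congrFun hv ⟨i, hin⟩
      simp only [Matrix.mulVec, dotProduct, Pi.zero_apply] at hvi
      rw [hik, hfc]
      calc (∑ j : Fin n, v j * (τ ^ ((2*n - j.val) - (2*i+1)) * ((2*n - j.val).choose (2*i+1) : ℝ)))
          = ∑ j : Fin n, M ⟨i, hin⟩ j * v j := by
            refine Finset.sum_congr rfl fun j _ => ?_
            rw [hM]; ring
        _ = 0 := hvi
    · have hlt : f.natDegree < k := by omega
      exact coeff_eq_zero_of_natDegree_lt hlt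
  have hev : f.comp (-X) = f := by
    ext k
    rw [coeff_comp_neg_X']
    rcases Nat.even_or_odd k with he | ho
    · rw [he.neg_one_pow, one_mul]
    · rw [hodd k ho, mul_zero]
  have hdvd1 : (X + C τ : ℝ[X])^(n+1) ∣ f := by
    refine ⟨∑ j : Fin n, C (v j) * (X + C τ)^((2*n - j.val) - (n+1)), ?_⟩
    rw [hf, Finset.mul_sum]
    refine Finset.sum_congr rfl fun j _ => ?_
    have hj : (j : ℕ) < n := j.isLt
    have e : 2*n - j.val = (n+1) + ((2*n - j.val) - (n+1)) := by omega
    conv_lhs => rw [e]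
    rw [pow_add]; ring
  have hdvd2 : (X - C τ : ℝ[X])^(n+1) ∣ f := by
    obtain ⟨q, hq⟩ := hdvd1
    have hfq : f = ((X + C τ)^(n+1) * q).comp (-X) := by rw [← hq, hev]
    rw [hfq, mul_comp, pow_comp, add_comp, X_comp, C_comp]
    have h2 : (-X + C τ : ℝ[X]) = -(X - C τ) := by ring
    rw [h2]
    exact Dvd.dvd.mul_right (pow_dvd_pow_of_dvd (dvd_neg.mpr dvd_rfl) _) _
  have hcop : IsCoprime ((X - C τ : ℝ[X])^(n+1)) ((X + C τ)^(n+1)) := by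
    have h1 : IsCoprime (X - C τ : ℝ[X]) (X - C (-τ)) :=
      isCoprime_X_sub_C_of_isUnit_sub (by
        refine isUnit_iff_ne_zero.mpr ?_
        intro hz
        apply hτ
        nlinarith [hz])
    have := h1.pow (m := n+1) (n := n+1)
    simpa [map_neg, sub_neg_eq_add] using this
  have hf0 : f = 0 := by
    by_contra hne
    have hdv := hcop.mul_dvd hdvd2 hdvd1
    have hle := Polynomial.natDegree_le_of_dvd hdv hne
    rw [natDegree_mul (((monic_X_sub_C τ).pow _).ne_zero) (((monic_X_add_C τ).pow _).ne_zero),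
      natDegree_pow, natDegree_pow, natDegree_X_sub_C, natDegree_X_add_C] at hle
    omega
  have hg : (∑ j : Fin n, C (v j) * X^(2*n - j.val)) = 0 := by
    have hc0 : f.comp (X - C τ) = 0 := by rw [hf0, zero_comp]
    have hsum : f.comp (X - C τ) = ∑ j : Fin n, (C (v j) * (X + C τ)^(2*n - j.val)).comp (X - C τ) := by
      rw [hf]; exact map_sum (compRingHom (X - C τ)) _ _
    rw [hsum] at hc0
    rw [← hc0]
    refine Finset.sum_congr rfl fun j _ => ?_
    simp only [mul_comp, pow_comp, add_comp, X_comp, C_comp, sub_add_cancel]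
  apply hv0
  funext j0
  have hco := congrArg (fun p => p.coeff (2*n - j0.val)) hg
  simp only [finset_sum_coeff, coeff_C_mul, coeff_X_pow, coeff_zero] at hco
  rw [Finset.sum_eq_single j0] at hco
  · simpa using hco
  · intro j _ hj
    have hne' : (j : ℕ) ≠ (j0 : ℕ) := fun hh => hj (Fin.ext hh)
    have hj1 : (j : ℕ) < n := j.isLt
    have hj2 : (j0 : ℕ) < n := j0.isLt
    have hne2 : 2*n - j0.val ≠ 2*n - j.val := by omega
    simp [hne2]
  · simp
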